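/- arXiv:2308.16172 — 4 statements merged into one kernel-verified Lean document; each statement's English description precedes it below -/
import Mathlib

section
/- Let G be a finite simple graph with vertex set V, let w : V → (0,∞) be weights, let y, θ* : V → ℝ, and let V_n > 0 satisfy ‖∇_G θ*‖₁ ≤ V_n. Suppose θ̂ minimizes Σ_{v∈V} w_v (y_v − θ_v)² over {θ : V → ℝ : ‖∇_G θ‖₁ ≤ V_n}, and write ζ := y − θ*. If ‖θ̂ − θ*‖_w > η for some η > 0, then there exists Δ : V → ℝ with ‖Δ‖_w = η and ‖∇_G Δ‖₁ ≤ 2 V_n such that Σ_{v∈V} w_v Δ_v ζ_v ≥ η²/2; in particular, sup{ Σ_{v∈V} w_v Δ_v ζ_v : Δ : V → ℝ, ‖Δ‖_w ≤ η, ‖∇_G Δ‖₁ ≤ 2 V_n } ≥ η²/2. -/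
open Finset

/-- Total variation of a signal `θ` along a finite simple graph `G`. -/
noncomputable def gradTV {V : Type*} [Fintype V] [DecidableEq V]
    (G : SimpleGraph V) [DecidableRel G.Adj] (θ : V → ℝ) : ℝ :=
  ∑ e ∈ G.edgeFinset,
    Sym2.lift ⟨fun u w => |θ u - θ w|, fun u w => abs_sub_comm (θ u) (θ w)⟩ e

/-- Weighted norm `‖Δ‖_w = (Σ_v w_v Δ_v²)^{1/2}`. -/
noncomputable def wNorm {V : Type*} [Fintype V] (w : V → ℝ) (Δ : V → ℝ) : ℝ :=
  Real.sqrt (∑ v, w v * Δ v ^ 2)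

/-! The error `D = θ̂ - θ*` satisfies `‖D‖_w > η`, so the rescaled increment `Δ = (η / ‖D‖_w) • D`
has norm exactly `η`. Since the total-variation ball is convex, `θ* + Δ` is feasible, and comparing
the least-squares objective at `θ̂` and at `θ* + Δ` (the basic inequality) gives
`⟨Δ, ζ⟩_w ≥ η² / 2`. The total variation of `Δ` is at most that of `D`, hence at most `2 Vₙ`,
and Cauchy–Schwarz bounds the noise process, so its supremum is at least `⟨Δ, ζ⟩_w`. -/

section TotalVariation

variable {V : Type*} [Fintype V] [DecidableEq V] (G : SimpleGraph V) [DecidableRel G.Adj]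

lemma gradTV_add_le (f g : V → ℝ) : gradTV G (f + g) ≤ gradTV G f + gradTV G g := by
  rw [gradTV, gradTV, gradTV, ← sum_add_distrib]
  refine sum_le_sum fun e _ => ?_
  induction e using Sym2.ind with
  | _ u v =>
    simpa only [Sym2.lift_mk, Pi.add_apply, add_sub_add_comm] using abs_add_le _ _

lemma gradTV_smul (c : ℝ) (θ : V → ℝ) : gradTV G (c • θ) = |c| * gradTV G θ := by
  rw [gradTV, gradTV, mul_sum]
  refine sum_congr rfl fun e _ => ?_
  induction e using Sym2.ind with
  | _ u v => simp only [Sym2.lift_mk, Pi.smul_apply, smul_eq_mul, ← mul_sub, abs_mul]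

noncomputable def gradTVSeminorm : Seminorm ℝ (V → ℝ) :=
  Seminorm.of (gradTV G) (gradTV_add_le G) (gradTV_smul G)

lemma gradTV_nonneg (θ : V → ℝ) : 0 ≤ gradTV G θ :=
  apply_nonneg (gradTVSeminorm G) θ

lemma gradTV_sub_le (f g : V → ℝ) : gradTV G (f - g) ≤ gradTV G f + gradTV G g :=
  map_sub_le_add (gradTVSeminorm G) f g

lemma convex_gradTV_le (r : ℝ) : Convex ℝ {θ : V → ℝ | gradTV G θ ≤ r} := by
  have h := (gradTVSeminorm G).convexOn.convex_le r
  simp only [Set.mem_univ, true_and] at h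
  exact h

end TotalVariation

section WeightedNorm

variable {V : Type*} [Fintype V] {w : V → ℝ}

lemma wNorm_sq (hw : ∀ v, 0 ≤ w v) (Δ : V → ℝ) : wNorm w Δ ^ 2 = ∑ v, w v * Δ v ^ 2 :=
  Real.sq_sqrt (sum_nonneg fun v _ => mul_nonneg (hw v) (sq_nonneg _))

lemma wNorm_smul (c : ℝ) (Δ : V → ℝ) : wNorm w (c • Δ) = |c| * wNorm w Δ := by
  have hsum : ∑ v, w v * (c • Δ) v ^ 2 = c ^ 2 * ∑ v, w v * Δ v ^ 2 := by
    rw [mul_sum]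
    exact sum_congr rfl fun v _ => by simp only [Pi.smul_apply, smul_eq_mul]; ring
  rw [wNorm, hsum, Real.sqrt_mul (sq_nonneg c), Real.sqrt_sq_eq_abs, wNorm]

lemma sum_mul_mul_le_wNorm_mul_wNorm (hw : ∀ v, 0 ≤ w v) (f g : V → ℝ) :
    ∑ v, w v * f v * g v ≤ wNorm w f * wNorm w g := by
  have hsq : (∑ v, w v * f v * g v) ^ 2 ≤ (∑ v, w v * f v ^ 2) * ∑ v, w v * g v ^ 2 :=
    sum_sq_le_sum_mul_sum_of_sq_le_mul _ (fun v _ => mul_nonneg (hw v) (sq_nonneg _))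
      (fun v _ => mul_nonneg (hw v) (sq_nonneg _)) fun v _ => le_of_eq (by ring)
  calc ∑ v, w v * f v * g v ≤ |∑ v, w v * f v * g v| := le_abs_self _
    _ ≤ √((∑ v, w v * f v ^ 2) * ∑ v, w v * g v ^ 2) := Real.abs_le_sqrt hsq
    _ = wNorm w f * wNorm w g :=
      Real.sqrt_mul (sum_nonneg fun v _ => mul_nonneg (hw v) (sq_nonneg _)) _

end WeightedNorm

section Peeling

variable {V : Type*} [Fintype V] {w : V → ℝ} {y θstar θhat : V → ℝ}

lemma weighted_least_squares_basic_inequality {t : ℝ} (ht : t < 1)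
    (hfit : ∑ v, w v * (y v - θhat v) ^ 2 ≤
      ∑ v, w v * (y v - (θstar + t • (θhat - θstar)) v) ^ 2) :
    (1 + t) * ∑ v, w v * (θhat - θstar) v ^ 2 ≤
      2 * ∑ v, w v * (θhat - θstar) v * (y v - θstar v) := by
  have hgap : ∑ v, w v * (y v - (θstar + t • (θhat - θstar)) v) ^ 2 -
      ∑ v, w v * (y v - θhat v) ^ 2 = (1 - t) * (2 * ∑ v, w v * (θhat - θstar) v * (y v - θstar v)
        - (1 + t) * ∑ v, w v * (θhat - θstar) v ^ 2) := by
    simp only [mul_sum, ← sum_sub_distrib]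
    exact sum_congr rfl fun v _ => by
      simp only [Pi.add_apply, Pi.sub_apply, Pi.smul_apply, smul_eq_mul]; ring
  nlinarith

lemma exists_scaled_error_of_lt_wNorm {s : Set (V → ℝ)} (hs : Convex ℝ s) (hw : ∀ v, 0 ≤ w v)
    (hstar : θstar ∈ s) (hhat : θhat ∈ s)
    (hmin : ∀ θ ∈ s, ∑ v, w v * (y v - θhat v) ^ 2 ≤ ∑ v, w v * (y v - θ v) ^ 2)
    {η : ℝ} (hη : 0 ≤ η) (hbig : η < wNorm w (θhat - θstar)) :
    ∃ t ∈ Set.Icc (0 : ℝ) 1, wNorm w (t • (θhat - θstar)) = η ∧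
      η ^ 2 / 2 ≤ ∑ v, w v * (t • (θhat - θstar)) v * (y v - θstar v) := by
  set D := θhat - θstar
  set N := wNorm w D
  have hN : 0 < N := hη.trans_lt hbig
  set t := η / N
  have ht0 : 0 ≤ t := div_nonneg hη hN.le
  have ht1 : t < 1 := (div_lt_one hN).2 hbig
  have hbasic := weighted_least_squares_basic_inequality ht1
    (hmin _ (hs.add_smul_sub_mem hstar hhat ⟨ht0, ht1.le⟩))
  rw [← wNorm_sq hw] at hbasic
  have htN : t * N = η := div_mul_cancel₀ η hN.ne'
  refine ⟨t, ⟨ht0, ht1.le⟩, by rw [wNorm_smul, abs_of_nonneg ht0, htN], ?_⟩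
  have hinner : ∑ v, w v * (t • D) v * (y v - θstar v) =
      t * ∑ v, w v * D v * (y v - θstar v) := by
    rw [mul_sum]
    exact sum_congr rfl fun v _ => by simp only [Pi.smul_apply, smul_eq_mul]; ring
  rw [hinner, ← htN]
  nlinarith [mul_le_mul_of_nonneg_left hbasic ht0, mul_nonneg ht0 (sq_nonneg N)]

end Peeling

theorem constrained_fused_lasso_peeling_general
    {V : Type*} [Fintype V] [DecidableEq V]
    (G : SimpleGraph V) [DecidableRel G.Adj]
    (w : V → ℝ) (hw : ∀ v, 0 < w v)
    (y θstar θhat : V → ℝ) (Vn : ℝ)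
    (hθstar : gradTV G θstar ≤ Vn)
    (hfeas : gradTV G θhat ≤ Vn)
    (hmin : ∀ θ : V → ℝ, gradTV G θ ≤ Vn →
      ∑ v, w v * (y v - θhat v) ^ 2 ≤ ∑ v, w v * (y v - θ v) ^ 2)
    (η : ℝ) (hη : 0 < η)
    (hbig : η < wNorm w (fun v => θhat v - θstar v)) :
    (∃ Δ : V → ℝ, wNorm w Δ = η ∧ gradTV G Δ ≤ 2 * Vn ∧
      η ^ 2 / 2 ≤ ∑ v, w v * Δ v * (y v - θstar v)) ∧
    η ^ 2 / 2 ≤ sSup {s : ℝ | ∃ Δ : V → ℝ, wNorm w Δ ≤ η ∧ gradTV G Δ ≤ 2 * Vn ∧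
      s = ∑ v, w v * Δ v * (y v - θstar v)} := by
  have hw' : ∀ v, 0 ≤ w v := fun v => (hw v).le
  obtain ⟨t, ⟨ht0, ht1⟩, hnorm, hlow⟩ := exists_scaled_error_of_lt_wNorm
    (convex_gradTV_le G Vn) hw' hθstar hfeas hmin hη.le hbig
  have htv : gradTV G (t • (θhat - θstar)) ≤ 2 * Vn := by
    rw [gradTV_smul, abs_of_nonneg ht0]
    nlinarith [gradTV_sub_le G θhat θstar, gradTV_nonneg G (θhat - θstar)]
  refine ⟨⟨_, hnorm, htv, hlow⟩, hlow.trans (le_csSup ⟨η * wNorm w (y - θstar), ?_⟩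
    ⟨_, hnorm.le, htv, rfl⟩)⟩
  rintro _ ⟨Δ, hΔ, -, rfl⟩
  exact (sum_mul_mul_le_wNorm_mul_wNorm hw' Δ (y - θstar)).trans
    (mul_le_mul_of_nonneg_right hΔ (Real.sqrt_nonneg _))

/-- Peeling reduction for the constrained graph fused lasso: if the estimation
error exceeds `η`, then some feasible increment `Δ` of weighted norm exactly `η`
and graph total variation at most `2 Vₙ` has a large inner product with the noise;
in particular, the supremum of the noise process over the feasible set is at
least `η²/2`. -/
theorem constrained_fused_lasso_peeling
    {V : Type*} [Fintype V] [DecidableEq V]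
    (G : SimpleGraph V) [DecidableRel G.Adj]
    (w : V → ℝ) (hw : ∀ v, 0 < w v)
    (y θstar θhat : V → ℝ) (Vn : ℝ) (hVn : 0 < Vn)
    (hθstar : gradTV G θstar ≤ Vn)
    (hfeas : gradTV G θhat ≤ Vn)
    (hmin : ∀ θ : V → ℝ, gradTV G θ ≤ Vn →
      ∑ v, w v * (y v - θhat v) ^ 2 ≤ ∑ v, w v * (y v - θ v) ^ 2)
    (η : ℝ) (hη : 0 < η)
    (hbig : η < wNorm w (fun v => θhat v - θstar v)) :
    (∃ Δ : V → ℝ, wNorm w Δ = η ∧ gradTV G Δ ≤ 2 * Vn ∧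
      η ^ 2 / 2 ≤ ∑ v, w v * Δ v * (y v - θstar v)) ∧
    η ^ 2 / 2 ≤ sSup {s : ℝ | ∃ Δ : V → ℝ, wNorm w Δ ≤ η ∧ gradTV G Δ ≤ 2 * Vn ∧
      s = ∑ v, w v * Δ v * (y v - θstar v)} :=
  constrained_fused_lasso_peeling_general G w hw y θstar θhat Vn hθstar hfeas hmin η hη hbig
end

section
/- Let G be a finite simple graph with vertex set V, let w : V → (0,∞) be weights, let y, θ* : V → ℝ with ‖∇_G θ*‖₁ > 0, let η > 0, and set λ := η² / (4 ‖∇_G θ*‖₁). Suppose θ̂ minimizes Σ_{v∈V} w_v (y_v − θ_v)² + λ ‖∇_G θ‖₁ over all θ : V → ℝ, and write ζ := y − θ*. Assume ‖θ̂ − θ*‖_w > η and that every convex combination θ = t·θ̂ + (1−t)·θ* (t ∈ [0,1]) with ‖θ − θ*‖_w ≤ η satisfies ‖∇_G θ‖₁ < 5 ‖∇_G θ*‖₁. Then there exists Δ : V → ℝ with ‖Δ‖_w = η and ‖∇_G Δ‖₁ ≤ 6 ‖∇_G θ*‖₁ such that Σ_{v∈V} w_v Δ_v ζ_v ≥ η²/4.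 -/
open Finset

section GradTV

variable {V : Type*} [Fintype V] [DecidableEq V] (G : SimpleGraph V) [DecidableRel G.Adj]

lemma gradTV_linear_combination_le (α β : ℝ) (a b : V → ℝ) :
    gradTV G (fun v => α * a v + β * b v) ≤ |α| * gradTV G a + |β| * gradTV G b := by
  rw [gradTV, gradTV, gradTV, mul_sum, mul_sum, ← sum_add_distrib]
  refine sum_le_sum fun e _ => ?_
  induction e using Sym2.ind with
  | _ u v =>
    calc |α * a u + β * b u - (α * a v + β * b v)|
        = |α * (a u - a v) + β * (b u - b v)| := by ring_nf
      _ ≤ |α| * |a u - a v| + |β| * |b u - b v| := by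
          rw [← abs_mul, ← abs_mul]; exact abs_add_le _ _

lemma gradTV_convex_combination_le {t : ℝ} (ht0 : 0 ≤ t) (ht1 : t ≤ 1) (a b : V → ℝ) :
    gradTV G (fun v => t * a v + (1 - t) * b v) ≤ t * gradTV G a + (1 - t) * gradTV G b := by
  simpa only [abs_of_nonneg ht0, abs_of_nonneg (sub_nonneg.2 ht1)]
    using gradTV_linear_combination_le G t (1 - t) a b

lemma gradTV_sub_le_s4 (a b : V → ℝ) :
    gradTV G (fun v => a v - b v) ≤ gradTV G a + gradTV G b := by
  simpa only [one_mul, neg_one_mul, ← sub_eq_add_neg, abs_one, abs_neg]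
    using gradTV_linear_combination_le G 1 (-1) a b

end GradTV

section WNorm

variable {V : Type*} [Fintype V] (w : V → ℝ)

lemma wNorm_const_mul (c : ℝ) (Δ : V → ℝ) :
    wNorm w (fun v => c * Δ v) = |c| * wNorm w Δ := by
  have hsum : ∑ v, w v * (c * Δ v) ^ 2 = c ^ 2 * ∑ v, w v * Δ v ^ 2 := by
    rw [mul_sum]; exact sum_congr rfl fun v _ => by ring
  rw [wNorm, wNorm, hsum, Real.sqrt_mul (sq_nonneg c), Real.sqrt_sq_eq_abs]

lemma wNorm_sq_of_pos {Δ : V → ℝ} (h : 0 < wNorm w Δ) :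
    wNorm w Δ ^ 2 = ∑ v, w v * Δ v ^ 2 :=
  Real.sq_sqrt (Real.sqrt_pos.1 h).le

end WNorm

lemma sum_mul_sub_add_sq {V : Type*} [Fintype V] (w y θ d : V → ℝ) :
    ∑ v, w v * (y v - (θ v + d v)) ^ 2 =
      ∑ v, w v * (y v - θ v) ^ 2 - 2 * ∑ v, w v * d v * (y v - θ v) + ∑ v, w v * d v ^ 2 := by
  rw [mul_sum, ← sum_sub_distrib, ← sum_add_distrib]
  exact sum_congr rfl fun v _ => by ring

lemma div_mul_self_le {a : ℝ} (ha : 0 ≤ a) (b : ℝ) : a / b * b ≤ a := by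
  rcases eq_or_ne b 0 with rfl | hb
  · simpa using ha
  · rw [div_mul_cancel₀ a hb]

noncomputable def fusedLassoObjective {V : Type*} [Fintype V] [DecidableEq V]
    (G : SimpleGraph V) [DecidableRel G.Adj] (w y : V → ℝ) (lam : ℝ) (θ : V → ℝ) : ℝ :=
  (∑ v, w v * (y v - θ v) ^ 2) + lam * gradTV G θ

lemma basic_inequality_of_fusedLassoObjective_le {V : Type*} [Fintype V] [DecidableEq V]
    (G : SimpleGraph V) [DecidableRel G.Adj] {w y θstar θhat : V → ℝ} {lam t : ℝ}
    (hmin : fusedLassoObjective G w y lam θhat ≤ fusedLassoObjective G w y lam θstar)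
    (hlam : 0 ≤ lam) (ht0 : 0 ≤ t) (ht1 : t ≤ 1) :
    t * ∑ v, w v * (θhat v - θstar v) ^ 2
        + lam * gradTV G (fun v => t * θhat v + (1 - t) * θstar v) ≤
      2 * ∑ v, w v * (t * (θhat v - θstar v)) * (y v - θstar v) + lam * gradTV G θstar := by
  have hquad := sum_mul_sub_add_sq w y θstar (fun v => θhat v - θstar v)
  simp only [add_sub_cancel] at hquad
  have hinner : ∑ v, w v * (t * (θhat v - θstar v)) * (y v - θstar v) =
      t * ∑ v, w v * (θhat v - θstar v) * (y v - θstar v) := by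
    rw [mul_sum]; exact sum_congr rfl fun v _ => by ring
  have hconv := mul_le_mul_of_nonneg_left
    (gradTV_convex_combination_le G ht0 ht1 θhat θstar) hlam
  have := mul_le_mul_of_nonneg_left hmin ht0
  unfold fusedLassoObjective at this
  rw [hquad] at this
  linarith

theorem penalized_fused_lasso_peeling_general
    {V : Type*} [Fintype V] [DecidableEq V]
    (G : SimpleGraph V) [DecidableRel G.Adj]
    (w : V → ℝ)
    (y θstar θhat : V → ℝ)
    (η : ℝ) (hη : 0 < η)
    (lam : ℝ) (hlam : lam = η ^ 2 / (4 * gradTV G θstar))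
    (hmin : ∀ θ : V → ℝ,
      (∑ v, w v * (y v - θhat v) ^ 2) + lam * gradTV G θhat ≤
        (∑ v, w v * (y v - θ v) ^ 2) + lam * gradTV G θ)
    (hbig : η < wNorm w (fun v => θhat v - θstar v))
    (hsmallTV : ∀ t ∈ Set.Icc (0 : ℝ) 1,
      wNorm w (fun v => t * θhat v + (1 - t) * θstar v - θstar v) ≤ η →
      gradTV G (fun v => t * θhat v + (1 - t) * θstar v) < 5 * gradTV G θstar) :
    ∃ Δ : V → ℝ, wNorm w Δ = η ∧ gradTV G Δ ≤ 6 * gradTV G θstar ∧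
      η ^ 2 / 4 ≤ ∑ v, w v * Δ v * (y v - θstar v) := by
  set N := wNorm w (fun v => θhat v - θstar v)
  have hN : 0 < N := hη.trans hbig
  set t := η / N with ht
  have ht0 : 0 < t := div_pos hη hN
  have ht1 : t < 1 := (div_lt_one hN).2 hbig
  have hlam0 : 0 ≤ lam := hlam ▸ div_nonneg (sq_nonneg η) (by linarith [gradTV_nonneg G θstar])
  have hlamJ : lam * gradTV G θstar ≤ η ^ 2 / 4 := by
    rw [hlam, ← div_div]; exact div_mul_self_le (by positivity) _
  have hbasic := basic_inequality_of_fusedLassoObjective_le G (hmin θstar) hlam0 ht0.le ht1.le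
  set θt := fun v => t * θhat v + (1 - t) * θstar v
  have hΔ : (fun v => θt v - θstar v) = fun v => t * (θhat v - θstar v) := by
    funext v; ring
  have hΔnorm : wNorm w (fun v => t * (θhat v - θstar v)) = η := by
    rw [wNorm_const_mul, abs_of_pos ht0, div_mul_cancel₀ η hN.ne']
  have hTVt : gradTV G θt < 5 * gradTV G θstar :=
    hsmallTV t ⟨ht0.le, ht1.le⟩ (by rw [hΔ, hΔnorm])
  have hηN : η ^ 2 ≤ t * ∑ v, w v * (θhat v - θstar v) ^ 2 := by
    have htN : t * N ^ 2 = η * N := by rw [ht]; field_simp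
    rw [← wNorm_sq_of_pos w hN, htN, sq]
    exact mul_le_mul_of_nonneg_left hbig.le hη.le
  refine ⟨_, hΔnorm, ?_, ?_⟩
  · rw [← hΔ]; linarith [gradTV_sub_le_s4 G θt θstar]
  · linarith [mul_nonneg hlam0 (gradTV_nonneg G θt), sq_nonneg η]

/-- Step 2 of the analysis of the penalized graph fused lasso with
`λ = η²/(4‖∇_G θ*‖₁)`: if the estimation error exceeds `η` and every convex
combination with the truth that lies in the `η`-ball has graph total variation
below `5‖∇_G θ*‖₁`, then some increment `Δ` of weighted norm exactly `η` and
graph total variation at most `6‖∇_G θ*‖₁` has noise inner product at least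
`η²/4`. -/
theorem penalized_fused_lasso_peeling
    {V : Type*} [Fintype V] [DecidableEq V]
    (G : SimpleGraph V) [DecidableRel G.Adj]
    (w : V → ℝ) (hw : ∀ v, 0 < w v)
    (y θstar θhat : V → ℝ)
    (hJpos : 0 < gradTV G θstar)
    (η : ℝ) (hη : 0 < η)
    (lam : ℝ) (hlam : lam = η ^ 2 / (4 * gradTV G θstar))
    (hmin : ∀ θ : V → ℝ,
      (∑ v, w v * (y v - θhat v) ^ 2) + lam * gradTV G θhat ≤
        (∑ v, w v * (y v - θ v) ^ 2) + lam * gradTV G θ)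
    (hbig : η < wNorm w (fun v => θhat v - θstar v))
    (hsmallTV : ∀ t ∈ Set.Icc (0 : ℝ) 1,
      wNorm w (fun v => t * θhat v + (1 - t) * θstar v - θstar v) ≤ η →
      gradTV G (fun v => t * θhat v + (1 - t) * θstar v) < 5 * gradTV G θstar) :
    ∃ Δ : V → ℝ, wNorm w Δ = η ∧ gradTV G Δ ≤ 6 * gradTV G θstar ∧
      η ^ 2 / 4 ≤ ∑ v, w v * Δ v * (y v - θstar v) :=
  penalized_fused_lasso_peeling_general G w y θstar θhat η hη lam hlam hmin hbig hsmallTV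
end

section
/- Let H be a real separable Hilbert space and let δ₀, δ, δ* be H-valued Bochner-measurable random elements on a common probability space. Assume: (i) δ* is independent of δ₀; (ii) δ* has the same distribution as δ; (iii) δ has the same distribution as δ₀; (iv) E[δ₀] = 0 (Bochner expectation); and (v) E[‖δ₀‖^{2p}] < ∞ for some p > 1, with q > 1 the conjugate exponent, 1/p + 1/q = 1. If P(δ ≠ δ*) ≤ β for some β ∈ [0,1], then |E⟨δ₀, δ⟩| ≤ 2 β^{1/q} (E[‖δ₀‖^{2p}])^{1/p}. -/
open MeasureTheory ProbabilityTheory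
open scoped RealInnerProductSpace ENNReal

/-!
Independence of `δ*` from the centred `δ₀` gives `E⟪δ₀, δ*⟫ = 0`, so `E⟪δ₀, δ⟫ = E⟪δ₀, δ - δ*⟫`,
whose integrand vanishes off `A = {δ ≠ δ*}` and is bounded on `A` by `‖δ₀‖ ‖δ‖ + ‖δ₀‖ ‖δ*‖`.
Hölder's inequality with exponents `(p, q)` against `𝟙_A` bounds `E[𝟙_A ‖δ₀‖ ‖g‖]` by
`P(A)^{1/q} (E(‖δ₀‖ ‖g‖)^p)^{1/p}`, and since `g` has the law of `δ₀`, the AM-GM inequality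
`(ab)^p ≤ (a^{2p} + b^{2p}) / 2` gives `E(‖δ₀‖ ‖g‖)^p ≤ E‖δ₀‖^{2p}`.
-/

theorem mul_rpow_le_add_rpow_two_mul_div_two {a b : ℝ} (ha : 0 ≤ a) (hb : 0 ≤ b) (p : ℝ) :
    (a * b) ^ p ≤ (a ^ (2 * p) + b ^ (2 * p)) / 2 := by
  have h := two_mul_le_add_sq (a ^ p) (b ^ p)
  rw [Real.mul_rpow ha hb, mul_comm 2 p, Real.rpow_mul ha, Real.rpow_mul hb, Real.rpow_two,
    Real.rpow_two]
  linarith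

section Moments

variable {Ω E : Type*} [MeasurableSpace Ω] {P : Measure Ω} [NormedAddCommGroup E]

theorem integrable_of_integrable_norm_rpow [IsFiniteMeasure P] {f : Ω → E}
    (hf : AEStronglyMeasurable f P) {r : ℝ} (hr : 1 ≤ r)
    (h : Integrable (fun ω => ‖f ω‖ ^ r) P) : Integrable f P := by
  have h1 := integrable_norm_rpow_of_le hf zero_le_one (by linarith) hr h
  simp only [Real.rpow_one] at h1
  exact (integrable_norm_iff hf).mp h1

variable {X Y : Ω → E} (hX : AEStronglyMeasurable X P) (hY : AEStronglyMeasurable Y P) {p : ℝ}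
  (hXp : Integrable (fun ω => ‖X ω‖ ^ (2 * p)) P) (hYp : Integrable (fun ω => ‖Y ω‖ ^ (2 * p)) P)
include hX hY hXp hYp

theorem integrable_norm_mul_norm_rpow : Integrable (fun ω => (‖X ω‖ * ‖Y ω‖) ^ p) P := by
  refine ((hXp.add hYp).div_const 2).mono'
    ((hX.norm.mul hY.norm).aemeasurable.pow_const p).aestronglyMeasurable ?_
  filter_upwards with ω
  rw [Real.norm_of_nonneg (by positivity)]
  exact mul_rpow_le_add_rpow_two_mul_div_two (norm_nonneg _) (norm_nonneg _) p

theorem integral_norm_mul_norm_rpow_le :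
    ∫ ω, (‖X ω‖ * ‖Y ω‖) ^ p ∂P ≤
      ((∫ ω, ‖X ω‖ ^ (2 * p) ∂P) + ∫ ω, ‖Y ω‖ ^ (2 * p) ∂P) / 2 := by
  rw [← integral_add hXp hYp, ← integral_div]
  exact integral_mono (integrable_norm_mul_norm_rpow hX hY hXp hYp)
    ((hXp.add hYp).div_const 2)
    fun ω => mul_rpow_le_add_rpow_two_mul_div_two (norm_nonneg _) (norm_nonneg _) p

theorem memLp_norm_mul_norm (hp : 0 < p) :
    MemLp (fun ω => ‖X ω‖ * ‖Y ω‖) (ENNReal.ofReal p) P := by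
  refine (integrable_norm_rpow_iff (f := fun ω => ‖X ω‖ * ‖Y ω‖) (by fun_prop)
    (by simpa using hp) ENNReal.ofReal_ne_top).mp ?_
  simpa only [ENNReal.toReal_ofReal hp.le, norm_mul, norm_norm]
    using integrable_norm_mul_norm_rpow hX hY hXp hYp

end Moments

theorem setIntegral_le_measureReal_rpow_mul_integral_rpow {Ω : Type*} [MeasurableSpace Ω]
    {P : Measure Ω} [IsFiniteMeasure P] {p q : ℝ} (hpq : p.HolderConjugate q) {f : Ω → ℝ}
    (hf0 : 0 ≤ᵐ[P] f) (hf : MemLp f (ENNReal.ofReal p) P) {A : Set Ω} (hA : MeasurableSet A) :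
    ∫ ω in A, f ω ∂P ≤ P.real A ^ (1 / q) * (∫ ω, f ω ^ p ∂P) ^ (1 / p) := by
  have hind : MemLp (A.indicator (1 : Ω → ℝ)) (ENNReal.ofReal q) P :=
    memLp_indicator_const _ hA (1 : ℝ) (Or.inr (measure_ne_top P A))
  have hholder := integral_mul_le_Lp_mul_Lq_of_nonneg (g := A.indicator 1) hpq hf0
    (ae_of_all _ (Set.indicator_nonneg fun _ _ => zero_le_one)) hf hind
  have hind_rpow : (fun ω => A.indicator (1 : Ω → ℝ) ω ^ q) = A.indicator 1 := by
    ext ω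
    by_cases hω : ω ∈ A <;> simp [hω, Real.zero_rpow hpq.symm.ne_zero]
  have hmul_ind : (fun ω => f ω * A.indicator 1 ω) = A.indicator f := by
    ext ω
    by_cases hω : ω ∈ A <;> simp [hω]
  rw [hind_rpow, integral_indicator_one hA, hmul_ind, integral_indicator hA, mul_comm] at hholder
  exact hholder

section IdentDistrib

variable {Ω E : Type*} [MeasurableSpace Ω] {P : Measure Ω}
  [NormedAddCommGroup E] [MeasurableSpace E] [BorelSpace E]

theorem ProbabilityTheory.IdentDistrib.norm_rpow {α β : Type*} [MeasurableSpace α]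
    [MeasurableSpace β] {μ : Measure α} {ν : Measure β} {f : α → E} {g : β → E}
    (h : IdentDistrib f g μ ν) (r : ℝ) :
    IdentDistrib (fun x => ‖f x‖ ^ r) (fun x => ‖g x‖ ^ r) μ ν :=
  h.comp (measurable_norm.pow_const r)

variable {X Y : Ω → E} (hYX : IdentDistrib Y X P P) (hX : AEStronglyMeasurable X P) {p : ℝ}
  (hmom : Integrable (fun ω => ‖X ω‖ ^ (2 * p)) P)
include hYX hX hmom

theorem ProbabilityTheory.IdentDistrib.memLp_norm_mul_norm (hp : 0 < p) :
    MemLp (fun ω => ‖X ω‖ * ‖Y ω‖) (ENNReal.ofReal p) P :=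
  _root_.memLp_norm_mul_norm hX (hYX.symm.aestronglyMeasurable_snd hX) hmom
    ((hYX.norm_rpow _).integrable_iff.mpr hmom) hp

theorem ProbabilityTheory.IdentDistrib.setIntegral_norm_mul_norm_le [IsFiniteMeasure P] {q : ℝ}
    (hpq : p.HolderConjugate q) {A : Set Ω} (hA : MeasurableSet A) :
    ∫ ω in A, ‖X ω‖ * ‖Y ω‖ ∂P ≤ P.real A ^ (1 / q) * (∫ ω, ‖X ω‖ ^ (2 * p) ∂P) ^ (1 / p) := by
  have hY : AEStronglyMeasurable Y P := hYX.symm.aestronglyMeasurable_snd hX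
  have hYmom : Integrable (fun ω => ‖Y ω‖ ^ (2 * p)) P :=
    (hYX.norm_rpow _).integrable_iff.mpr hmom
  have hproduct : ∫ ω, (‖X ω‖ * ‖Y ω‖) ^ p ∂P ≤ ∫ ω, ‖X ω‖ ^ (2 * p) ∂P := by
    have h := integral_norm_mul_norm_rpow_le hX hY hmom hYmom
    rwa [(hYX.norm_rpow _).integral_eq, add_self_div_two] at h
  calc ∫ ω in A, ‖X ω‖ * ‖Y ω‖ ∂P
      ≤ P.real A ^ (1 / q) * (∫ ω, (‖X ω‖ * ‖Y ω‖) ^ p ∂P) ^ (1 / p) :=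
        setIntegral_le_measureReal_rpow_mul_integral_rpow hpq
          (ae_of_all _ fun ω => by positivity) (hYX.memLp_norm_mul_norm hX hmom hpq.pos) hA
    _ ≤ P.real A ^ (1 / q) * (∫ ω, ‖X ω‖ ^ (2 * p) ∂P) ^ (1 / p) := by
        gcongr
        exact hpq.one_div_pos.le

end IdentDistrib

section Inner

variable {Ω H : Type*} [MeasurableSpace Ω] {P : Measure Ω}
  [NormedAddCommGroup H] [InnerProductSpace ℝ H]

theorem ProbabilityTheory.IndepFun.integral_inner_eq_zero [CompleteSpace H] [MeasurableSpace H]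
    [BorelSpace H] {X Y : Ω → H} (hXY : X ⟂ᵢ[P] Y) (hX : Integrable X P) (hY : Integrable Y P)
    (hX0 : ∫ ω, X ω ∂P = 0) : ∫ ω, ⟪X ω, Y ω⟫ ∂P = 0 := by
  have h := hXY.integral_bilin hX hY (innerSL ℝ)
  rw [hX0, map_zero, zero_apply] at h
  exact h

theorem integrable_inner_of_integrable_norm_mul_norm {X Y : Ω → H}
    (hX : AEStronglyMeasurable X P) (hY : AEStronglyMeasurable Y P)
    (h : Integrable (fun ω => ‖X ω‖ * ‖Y ω‖) P) : Integrable (fun ω => ⟪X ω, Y ω⟫) P :=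
  h.mono' (hX.inner hY) (ae_of_all _ fun _ => norm_inner_le_norm _ _)

theorem abs_integral_inner_sub_integral_inner_le {X Y Z : Ω → H}
    (hX : AEStronglyMeasurable X P) (hY : AEStronglyMeasurable Y P)
    (hZ : AEStronglyMeasurable Z P) (hXY : Integrable (fun ω => ‖X ω‖ * ‖Y ω‖) P)
    (hXZ : Integrable (fun ω => ‖X ω‖ * ‖Z ω‖) P) :
    |∫ ω, ⟪X ω, Y ω⟫ ∂P - ∫ ω, ⟪X ω, Z ω⟫ ∂P| ≤
      ∫ ω in {ω | Y ω ≠ Z ω}, ‖X ω‖ * ‖Y ω‖ ∂P + ∫ ω in {ω | Y ω ≠ Z ω}, ‖X ω‖ * ‖Z ω‖ ∂P := by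
  rw [← integral_sub (integrable_inner_of_integrable_norm_mul_norm hX hY hXY)
      (integrable_inner_of_integrable_norm_mul_norm hX hZ hXZ),
    ← integral_add hXY.integrableOn hXZ.integrableOn]
  simp_rw [← inner_sub_right]
  rw [← setIntegral_eq_integral_of_forall_compl_eq_zero (s := {ω | Y ω ≠ Z ω})
    fun ω hω => by simp [not_not.mp hω]]
  refine abs_integral_le_integral_abs.trans (integral_mono_of_nonneg
    (ae_of_all _ fun _ => abs_nonneg _) (hXY.integrableOn.add hXZ.integrableOn)
    (ae_of_all _ fun ω => ?_))
  calc |⟪X ω, Y ω - Z ω⟫| ≤ ‖X ω‖ * ‖Y ω - Z ω‖ := abs_real_inner_le_norm _ _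
    _ ≤ ‖X ω‖ * (‖Y ω‖ + ‖Z ω‖) := by gcongr; exact norm_sub_le _ _
    _ = ‖X ω‖ * ‖Y ω‖ + ‖X ω‖ * ‖Z ω‖ := mul_add _ _ _

end Inner

theorem coupled_correlation_bound_general
    {Ω H : Type*} [MeasurableSpace Ω]
    [NormedAddCommGroup H] [InnerProductSpace ℝ H] [CompleteSpace H]
    [SecondCountableTopology H] [MeasurableSpace H] [BorelSpace H]
    (P : Measure Ω) [IsProbabilityMeasure P]
    (δ₀ δ δstar : Ω → H)
    (hδ₀ : Measurable δ₀) (hδ : Measurable δ) (hδstar : Measurable δstar)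
    (hindep : IndepFun δstar δ₀ P)
    (hsame₁ : Measure.map δstar P = Measure.map δ P)
    (hsame₂ : Measure.map δ P = Measure.map δ₀ P)
    (hmean : ∫ ω, δ₀ ω ∂P = 0)
    (p q : ℝ) (hp : 1 < p) (hpq : 1 / p + 1 / q = 1)
    (hmom : Integrable (fun ω => ‖δ₀ ω‖ ^ (2 * p)) P)
    (β : ℝ) (hβ : β ∈ Set.Icc (0 : ℝ) 1)
    (hcouple : P {ω | δ ω ≠ δstar ω} ≤ ENNReal.ofReal β) :
    |∫ ω, ⟪δ₀ ω, δ ω⟫ ∂P| ≤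
      2 * β ^ (1 / q) * (∫ ω, ‖δ₀ ω‖ ^ (2 * p) ∂P) ^ (1 / p) := by
  have hpq' : p.HolderConjugate q :=
    Real.holderConjugate_iff.mpr ⟨hp, by simpa only [one_div] using hpq⟩
  have hδ_law : IdentDistrib δ δ₀ P P := ⟨hδ.aemeasurable, hδ₀.aemeasurable, hsame₂⟩
  have hδstar_law : IdentDistrib δstar δ₀ P P :=
    ⟨hδstar.aemeasurable, hδ₀.aemeasurable, hsame₁.trans hsame₂⟩
  have hA : MeasurableSet {ω | δ ω ≠ δstar ω} := (measurableSet_eq_fun hδ hδstar).compl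
  have hPA : P.real {ω | δ ω ≠ δstar ω} ≤ β := ENNReal.toReal_le_of_le_ofReal hβ.1 hcouple
  have hint : ∀ g : Ω → H, IdentDistrib g δ₀ P P →
      Integrable (fun ω => ‖δ₀ ω‖ * ‖g ω‖) P := fun g hg =>
    (hg.memLp_norm_mul_norm hδ₀.aestronglyMeasurable hmom hpq'.pos).integrable
      (by simpa using hp.le)
  have hterm : ∀ g : Ω → H, IdentDistrib g δ₀ P P →
      ∫ ω in {ω | δ ω ≠ δstar ω}, ‖δ₀ ω‖ * ‖g ω‖ ∂P ≤
        β ^ (1 / q) * (∫ ω, ‖δ₀ ω‖ ^ (2 * p) ∂P) ^ (1 / p) := fun g hg =>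
    (hg.setIntegral_norm_mul_norm_le hδ₀.aestronglyMeasurable hmom hpq' hA).trans
      (by gcongr; exact hpq'.symm.one_div_pos.le)
  have hδ₀_int : Integrable δ₀ P :=
    integrable_of_integrable_norm_rpow hδ₀.aestronglyMeasurable (by linarith) hmom
  have hindep_zero : ∫ ω, ⟪δ₀ ω, δstar ω⟫ ∂P = 0 :=
    hindep.symm.integral_inner_eq_zero hδ₀_int (hδstar_law.integrable_iff.mpr hδ₀_int) hmean
  calc |∫ ω, ⟪δ₀ ω, δ ω⟫ ∂P| = |∫ ω, ⟪δ₀ ω, δ ω⟫ ∂P - ∫ ω, ⟪δ₀ ω, δstar ω⟫ ∂P| := by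
        rw [hindep_zero, sub_zero]
    _ ≤ _ := abs_integral_inner_sub_integral_inner_le hδ₀.aestronglyMeasurable
        hδ.aestronglyMeasurable hδstar.aestronglyMeasurable (hint δ hδ_law)
        (hint δstar hδstar_law)
    _ ≤ _ := add_le_add (hterm δ hδ_law) (hterm δstar hδstar_law)
    _ = 2 * β ^ (1 / q) * (∫ ω, ‖δ₀ ω‖ ^ (2 * p) ∂P) ^ (1 / p) := by ring

/-- Correlation bound for coupled spatial noise in a separable Hilbert space:
if `δ*` is an independent copy of `δ` (independent of `δ₀`), `δ` has the same
distribution as the centered `δ₀`, and `P(δ ≠ δ*) ≤ β`, then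
`|E⟨δ₀, δ⟩| ≤ 2 β^{1/q} (E‖δ₀‖^{2p})^{1/p}`. -/
theorem coupled_correlation_bound
    {Ω H : Type*} [MeasurableSpace Ω]
    [NormedAddCommGroup H] [InnerProductSpace ℝ H] [CompleteSpace H]
    [SecondCountableTopology H] [MeasurableSpace H] [BorelSpace H]
    (P : Measure Ω) [IsProbabilityMeasure P]
    (δ₀ δ δstar : Ω → H)
    (hδ₀ : Measurable δ₀) (hδ : Measurable δ) (hδstar : Measurable δstar)
    (hindep : IndepFun δstar δ₀ P)
    (hsame₁ : Measure.map δstar P = Measure.map δ P)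
    (hsame₂ : Measure.map δ P = Measure.map δ₀ P)
    (hmean : ∫ ω, δ₀ ω ∂P = 0)
    (p q : ℝ) (hp : 1 < p) (hq : 1 < q) (hpq : 1 / p + 1 / q = 1)
    (hmom : Integrable (fun ω => ‖δ₀ ω‖ ^ (2 * p)) P)
    (β : ℝ) (hβ : β ∈ Set.Icc (0 : ℝ) 1)
    (hcouple : P {ω | δ ω ≠ δstar ω} ≤ ENNReal.ofReal β) :
    |∫ ω, ⟪δ₀ ω, δ ω⟫ ∂P| ≤
      2 * β ^ (1 / q) * (∫ ω, ‖δ₀ ω‖ ^ (2 * p) ∂P) ^ (1 / p) :=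
  coupled_correlation_bound_general P δ₀ δ δstar hδ₀ hδ hδstar hindep hsame₁ hsame₂ hmean p q hp hpq
    hmom β hβ hcouple
end

section
/- Let H be a real separable Hilbert space, let p > 1 with conjugate exponent q (1/p + 1/q = 1), let C_β > 0, and let δ₁, …, δ_n be identically distributed H-valued Bochner-measurable random elements on a common probability space with E[δ₁] = 0 and M := (E[‖δ₁‖^{2p}])^{1/p} < ∞. If |E⟨δ_i, δ_j⟩| ≤ 2 e^{−C_β (j−i)/q} M for all 1 ≤ i < j ≤ n, then E[ ‖(1/n) Σ_{i=1}^n δ_i‖² ] ≤ (1/n) ( E[‖δ₁‖²] + 4 M Σ_{l=1}^∞ e^{−C_β l/q} ) = (1/n) ( E[‖δ₁‖²] + 4M / (e^{C_β/q} − 1) ). -/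
/-!
Expanding the square, `E‖∑ δᵢ‖² = ∑ᵢ ∑ⱼ E⟪δᵢ, δⱼ⟫`. By identical distribution every diagonal term
is `E‖δ₁‖²`, and in each row the off-diagonal terms are bounded by `2M` times the geometric series
`∑_{l ≥ 1} e^{-C_β l / q}` once on each side of the diagonal, so each row sum is at most
`E‖δ₁‖² + 4M ∑_{l ≥ 1} e^{-C_β l / q}`; dividing the `n` rows by `n²` gives the bound.
-/

open MeasureTheory ProbabilityTheory Finset
open scoped RealInnerProductSpace

lemma Real.tsum_exp_neg_mul_succ {c : ℝ} (hc : 0 < c) :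
    ∑' l : ℕ, Real.exp (-c * ((l : ℝ) + 1)) = 1 / (Real.exp c - 1) := by
  have hr : Real.exp (-c) < 1 := Real.exp_lt_one_iff.mpr (by linarith)
  have hterm : ∀ l : ℕ, Real.exp (-c * ((l : ℝ) + 1)) = Real.exp (-c) * Real.exp (-c) ^ l := by
    intro l
    rw [← Real.exp_nat_mul, ← Real.exp_add]
    ring_nf
  simp_rw [hterm]
  rw [tsum_mul_left, tsum_geometric_of_lt_one (Real.exp_pos _).le hr, Real.exp_neg]
  have : 1 < Real.exp c := Real.one_lt_exp_iff.mpr hc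
  field_simp

lemma Real.summable_exp_neg_mul_succ {c : ℝ} (hc : 0 < c) :
    Summable fun l : ℕ => Real.exp (-c * ((l : ℝ) + 1)) := by
  have := (summable_nat_add_iff 1).mpr (Real.summable_exp_nat_mul_iff.mpr (neg_lt_zero.mpr hc))
  simpa [mul_comm] using this

lemma sum_erase_dist_pred_le_two_mul_tsum {g : ℕ → ℝ} (hg0 : ∀ l, 0 ≤ g l) (hg : Summable g)
    (s : Finset ℕ) (i : ℕ) :
    ∑ j ∈ s.erase i, g (Nat.dist i j - 1) ≤ 2 * ∑' l, g l := by
  have hinj : ∀ t : Finset ℕ, Set.InjOn (fun j => Nat.dist i j - 1) t →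
      ∑ j ∈ t, g (Nat.dist i j - 1) ≤ ∑' l, g l := fun t ht => by
    rw [← Finset.sum_image ht]
    exact hg.sum_le_tsum _ fun l _ => hg0 l
  -- `j ↦ dist i j - 1` is injective on each side of `i`
  rw [← sum_filter_add_sum_filter_not _ (· < i), two_mul]
  gcongr <;> apply hinj <;> intro a ha b hb hab <;>
    simp only [coe_filter, mem_erase, Set.mem_ofPred_eq, Nat.dist] at ha hb hab <;> omega

lemma sum_sum_le_of_offDiag_le {a : ℕ → ℕ → ℝ} {g : ℕ → ℝ} (hg0 : ∀ l, 0 ≤ g l)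
    (hg : Summable g) (s : Finset ℕ) {D c : ℝ} (hc : 0 ≤ c) (hdiag : ∀ i ∈ s, a i i ≤ D)
    (hoff : ∀ i ∈ s, ∀ j ∈ s, i ≠ j → a i j ≤ c * g (Nat.dist i j - 1)) :
    ∑ i ∈ s, ∑ j ∈ s, a i j ≤ #s * (D + 2 * c * ∑' l, g l) := by
  rw [← nsmul_eq_mul, ← sum_const]
  refine sum_le_sum fun i hi => ?_
  rw [← add_sum_erase _ _ hi]
  calc a i i + ∑ j ∈ s.erase i, a i j
      ≤ D + ∑ j ∈ s.erase i, c * g (Nat.dist i j - 1) := by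
        gcongr with j hj
        · exact hdiag i hi
        · exact hoff i hi j (mem_of_mem_erase hj) (ne_of_mem_erase hj).symm
    _ ≤ D + 2 * c * ∑' l, g l := by
        rw [← mul_sum, mul_assoc, mul_left_comm]
        gcongr
        exact sum_erase_dist_pred_le_two_mul_tsum hg0 hg s i

lemma MeasureTheory.MemLp.of_integrable_norm_rpow {Ω E : Type*} [MeasurableSpace Ω]
    [NormedAddCommGroup E] {μ : Measure Ω} [IsFiniteMeasure μ] {f : Ω → E} {p : ℝ}
    (hf : AEStronglyMeasurable f μ) (hp : 2 ≤ p) (hint : Integrable (fun ω => ‖f ω‖ ^ p) μ) :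
    MemLp f 2 μ := by
  have hp' : ENNReal.ofReal p ≠ 0 := by rw [Ne, ENNReal.ofReal_eq_zero]; linarith
  rw [← ENNReal.toReal_ofReal (by linarith : 0 ≤ p),
    integrable_norm_rpow_iff hf hp' ENNReal.ofReal_ne_top] at hint
  exact hint.mono_exponent (by simpa using ENNReal.ofReal_le_ofReal hp)

section L2

variable {Ω H : Type*} [MeasurableSpace Ω] [NormedAddCommGroup H] [InnerProductSpace ℝ H]
  {μ : Measure Ω}

lemma MeasureTheory.MemLp.integrable_inner {f g : Ω → H} (hf : MemLp f 2 μ) (hg : MemLp g 2 μ) :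
    Integrable (fun ω => ⟪f ω, g ω⟫) μ := by
  refine (L2.integrable_inner (𝕜 := ℝ) (hf.toLp f) (hg.toLp g)).congr ?_
  filter_upwards [hf.coeFn_toLp, hg.coeFn_toLp] with ω hfω hgω
  rw [hfω, hgω]

lemma integral_norm_sum_sq {ι : Type*} (s : Finset ι) {f : ι → Ω → H}
    (hf : ∀ i ∈ s, MemLp (f i) 2 μ) :
    ∫ ω, ‖∑ i ∈ s, f i ω‖ ^ 2 ∂μ = ∑ i ∈ s, ∑ j ∈ s, ∫ ω, ⟪f i ω, f j ω⟫ ∂μ := by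
  simp_rw [← real_inner_self_eq_norm_sq, sum_inner, inner_sum]
  rw [integral_finsetSum _ fun i hi =>
    integrable_finsetSum _ fun j hj => (hf i hi).integrable_inner (hf j hj)]
  exact sum_congr rfl fun i hi =>
    integral_finsetSum _ fun j hj => (hf i hi).integrable_inner (hf j hj)

end L2

lemma integral_inner_le_of_abs_integral_inner_le {Ω H : Type*} [MeasurableSpace Ω]
    [NormedAddCommGroup H] [InnerProductSpace ℝ H] {μ : Measure Ω} {δ : ℕ → Ω → H}
    {s : Finset ℕ} {b : ℕ → ℝ}
    (h : ∀ i ∈ s, ∀ j ∈ s, i < j → |∫ ω, ⟪δ i ω, δ j ω⟫ ∂μ| ≤ b (Nat.dist i j))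
    {i j : ℕ} (hi : i ∈ s) (hj : j ∈ s) (hij : i ≠ j) :
    ∫ ω, ⟪δ i ω, δ j ω⟫ ∂μ ≤ b (Nat.dist i j) := by
  rcases hij.lt_or_gt with hlt | hgt
  · exact (le_abs_self _).trans (h i hi j hj hlt)
  · rw [integral_congr_ae (.of_forall fun ω => real_inner_comm (δ j ω) (δ i ω)), Nat.dist_comm]
    exact (le_abs_self _).trans (h j hj i hi hgt)

lemma Nat.cast_dist_sub_one_add_one {R : Type*} [AddGroupWithOne R] {i j : ℕ} (h : i < j) :
    ((Nat.dist i j - 1 : ℕ) : R) + 1 = j - i := by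
  have : Nat.dist i j - 1 + 1 + i = j := by rw [Nat.dist_eq_sub_of_le h.le]; omega
  rw [eq_sub_iff_add_eq, ← Nat.cast_succ, ← Nat.cast_add, this]

theorem dependent_average_second_moment_general
    {Ω H : Type*} [MeasurableSpace Ω]
    [NormedAddCommGroup H] [InnerProductSpace ℝ H]
    [SecondCountableTopology H] [MeasurableSpace H] [BorelSpace H]
    (P : Measure Ω) [IsProbabilityMeasure P]
    (n : ℕ)
    (δ : ℕ → Ω → H) (hδmeas : ∀ i, Measurable (δ i))
    (hident : ∀ i ∈ Finset.Icc 1 n, Measure.map (δ i) P = Measure.map (δ 1) P)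
    (p q : ℝ) (hp : 1 < p) (hq : 1 < q)
    (Cβ : ℝ) (hCβ : 0 < Cβ)
    (hmom : Integrable (fun ω => ‖δ 1 ω‖ ^ (2 * p)) P)
    (M : ℝ) (hM : M = (∫ ω, ‖δ 1 ω‖ ^ (2 * p) ∂P) ^ (1 / p))
    (hcorr : ∀ i j : ℕ, 1 ≤ i → i < j → j ≤ n →
      |∫ ω, ⟪δ i ω, δ j ω⟫ ∂P| ≤ 2 * Real.exp (-Cβ * ((j : ℝ) - i) / q) * M) :
    (∫ ω, ‖(n : ℝ)⁻¹ • ∑ i ∈ Finset.Icc 1 n, δ i ω‖ ^ 2 ∂P) ≤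
      (1 / n) * ((∫ ω, ‖δ 1 ω‖ ^ 2 ∂P)
        + 4 * M * ∑' l : ℕ, Real.exp (-Cβ * ((l : ℝ) + 1) / q)) ∧
    (∑' l : ℕ, Real.exp (-Cβ * ((l : ℝ) + 1) / q)) = 1 / (Real.exp (Cβ / q) - 1) := by
  have hg : (fun l : ℕ => Real.exp (-Cβ * ((l : ℝ) + 1) / q)) =
      fun l : ℕ => Real.exp (-(Cβ / q) * ((l : ℝ) + 1)) := by
    funext l; ring_nf
  have hc : 0 < Cβ / q := by positivity
  have hdist : ∀ i ∈ Icc 1 n, IdentDistrib (δ i) (δ 1) P P := fun i hi =>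
    ⟨(hδmeas i).aemeasurable, (hδmeas 1).aemeasurable, hident i hi⟩
  have hL2 : ∀ i ∈ Icc 1 n, MemLp (δ i) 2 P := fun i hi => (hdist i hi).memLp_iff.mpr <|
    .of_integrable_norm_rpow (hδmeas 1).aestronglyMeasurable (by linarith) hmom
  have hdiag : ∀ i ∈ Icc 1 n, ∫ ω, ⟪δ i ω, δ i ω⟫ ∂P ≤ ∫ ω, ‖δ 1 ω‖ ^ 2 ∂P := fun i hi => by
    simp_rw [real_inner_self_eq_norm_sq]
    exact ((hdist i hi).comp (measurable_norm.pow_const 2)).integral_eq.le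
  have hoff : ∀ i ∈ Icc 1 n, ∀ j ∈ Icc 1 n, i ≠ j → ∫ ω, ⟪δ i ω, δ j ω⟫ ∂P ≤
      2 * M * Real.exp (-Cβ * (((Nat.dist i j - 1 : ℕ) : ℝ) + 1) / q) := by
    refine fun i hi j hj => integral_inner_le_of_abs_integral_inner_le
      (b := fun d => 2 * M * Real.exp (-Cβ * (((d - 1 : ℕ) : ℝ) + 1) / q))
      (fun i hi j hj hij => ?_) hi hj
    rw [Nat.cast_dist_sub_one_add_one hij, mul_right_comm]
    exact hcorr i j (mem_Icc.mp hi).1 hij (mem_Icc.mp hj).2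
  have hM0 : 0 ≤ M := hM ▸ by positivity
  refine ⟨?_, hg ▸ Real.tsum_exp_neg_mul_succ hc⟩
  calc ∫ ω, ‖(n : ℝ)⁻¹ • ∑ i ∈ Icc 1 n, δ i ω‖ ^ 2 ∂P
      = (n : ℝ)⁻¹ ^ 2 * ∑ i ∈ Icc 1 n, ∑ j ∈ Icc 1 n, ∫ ω, ⟪δ i ω, δ j ω⟫ ∂P := by
        simp_rw [norm_smul, mul_pow, norm_inv, Real.norm_natCast]
        rw [integral_const_mul, integral_norm_sum_sq _ hL2]
    _ ≤ (n : ℝ)⁻¹ ^ 2 * (n * ((∫ ω, ‖δ 1 ω‖ ^ 2 ∂P)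
        + 2 * (2 * M) * ∑' l : ℕ, Real.exp (-Cβ * ((l : ℝ) + 1) / q))) := by
        gcongr
        have := sum_sum_le_of_offDiag_le (fun _ => (Real.exp_pos _).le)
          (hg ▸ Real.summable_exp_neg_mul_succ hc) _ (by positivity) hdiag hoff
        rwa [Nat.card_Icc, add_tsub_cancel_right] at this
    _ = _ := by
        rcases eq_or_ne (n : ℝ) 0 with hn | hn
        · simp [hn]
        · field_simp; ring

/-- Second-moment bound for the average of dependent identically distributed
centered noise in a separable Hilbert space: if the pairwise correlations decay
exponentially, `|E⟨δ_i, δ_j⟩| ≤ 2 e^{-C_β (j-i)/q} M`, then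
`E‖(1/n) Σ_{i=1}^n δ_i‖² ≤ (1/n)(E‖δ₁‖² + 4 M Σ_{l≥1} e^{-C_β l/q})`, and the
geometric series equals `1/(e^{C_β/q} - 1)`. -/
theorem dependent_average_second_moment
    {Ω H : Type*} [MeasurableSpace Ω]
    [NormedAddCommGroup H] [InnerProductSpace ℝ H] [CompleteSpace H]
    [SecondCountableTopology H] [MeasurableSpace H] [BorelSpace H]
    (P : Measure Ω) [IsProbabilityMeasure P]
    (n : ℕ) (hn : 0 < n)
    (δ : ℕ → Ω → H) (hδmeas : ∀ i, Measurable (δ i))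
    (hident : ∀ i ∈ Finset.Icc 1 n, Measure.map (δ i) P = Measure.map (δ 1) P)
    (hmean : ∫ ω, δ 1 ω ∂P = 0)
    (p q : ℝ) (hp : 1 < p) (hq : 1 < q) (hpq : 1 / p + 1 / q = 1)
    (Cβ : ℝ) (hCβ : 0 < Cβ)
    (hmom : Integrable (fun ω => ‖δ 1 ω‖ ^ (2 * p)) P)
    (M : ℝ) (hM : M = (∫ ω, ‖δ 1 ω‖ ^ (2 * p) ∂P) ^ (1 / p))
    (hcorr : ∀ i j : ℕ, 1 ≤ i → i < j → j ≤ n →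
      |∫ ω, ⟪δ i ω, δ j ω⟫ ∂P| ≤ 2 * Real.exp (-Cβ * ((j : ℝ) - i) / q) * M) :
    (∫ ω, ‖(n : ℝ)⁻¹ • ∑ i ∈ Finset.Icc 1 n, δ i ω‖ ^ 2 ∂P) ≤
      (1 / n) * ((∫ ω, ‖δ 1 ω‖ ^ 2 ∂P)
        + 4 * M * ∑' l : ℕ, Real.exp (-Cβ * ((l : ℝ) + 1) / q)) ∧
    (∑' l : ℕ, Real.exp (-Cβ * ((l : ℝ) + 1) / q)) = 1 / (Real.exp (Cβ / q) - 1) :=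
  dependent_average_second_moment_general P n δ hδmeas hident p q hp hq Cβ hCβ hmom M hM hcorr
end
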